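/- Let Φ be a t-uniform purified code state with t ≥ 2, let T ⊆ {1,…,n−1} with |T| = t (so qudit n ∉ T, and qudit n is taken as the last coordinate of T^c), and let U be a T-standard-form unitary for Φ. Let ε ∈ ℂ^Q be any unit vector. Define χ ∈ ℂ^{Q^k} ⊗ (ℂ^Q)^{⊗(n−1)} by χ := Q^{−(t−1)/2} Σ_{s ∈ {0,…,Q−1}^k} Σ_{r ∈ {0,…,Q−1}^{n−t−1}} e_s (on R) ⊗ U(e_s ⊗ e_{r_1} ⊗ ⋯ ⊗ e_{r_{n−t−1}} ⊗ ε) (on the qudits in T) ⊗ e_{r_1} ⊗ ⋯ ⊗ e_{r_{n−t−1}} (on the qudits in {1,…,n−1}∖T). Then χ is a unit vector and, for every j ∈ {1,…,n−1}, the reduced density matrix of χ on qudit j equals Q^{−1}·I; in particular the Schmidt rank of χ across the bipartition (qudit j | all other registers) equals Q (Lemma C.2). -/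

import Mathlib

open scoped BigOperators

noncomputable section

/-- Combine an assignment on `A` with an assignment on the complement of `A`
into a full computational-basis string. -/
def mergeOn {n Q : ℕ} (A : Finset (Fin n)) (u : {i // i ∈ A} → Fin Q)
    (v : {i // i ∉ A} → Fin Q) : Fin n → Fin Q :=
  fun i => if h : i ∈ A then u ⟨i, h⟩ else v ⟨i, h⟩

/-- Reduced density matrix of a purified code state `Φ` on the qudits in `A`
(the reference register and the qudits outside `A` are traced out). -/
def rdm {Q k n : ℕ} (Φ : (Fin k → Fin Q) → (Fin n → Fin Q) → ℂ)
    (A : Finset (Fin n)) :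
    Matrix ({i // i ∈ A} → Fin Q) ({i // i ∈ A} → Fin Q) ℂ :=
  Matrix.of fun u v => ∑ s : Fin k → Fin Q, ∑ w : {i // i ∉ A} → Fin Q,
    Φ s (mergeOn A u w) * (starRingEnd ℂ) (Φ s (mergeOn A v w))

/-- `Φ` is `t`-uniform: every set of `t` qudits is maximally mixed. -/
def TUniform {Q k n : ℕ} (t : ℕ)
    (Φ : (Fin k → Fin Q) → (Fin n → Fin Q) → ℂ) : Prop :=
  ∀ A : Finset (Fin n), A.card = t →
    rdm Φ A = ((Q : ℂ) ^ t)⁻¹ •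
      (1 : Matrix ({i // i ∈ A} → Fin Q) ({i // i ∈ A} → Fin Q) ℂ)


/-- The state `χ` of Lemma C.2, in amplitude form: registers are the reference `R`
(`s : Fin k → Fin Q`), the `t` qudits in `T` in increasing order (`a : Fin t → Fin Q`), and
the `n-t-1` qudits in `{1,…,n-1} \ T` in increasing order (`r' : Fin (n-t-1) → Fin Q`).
`χ = Q^{-(t-1)/2} Σ_{s,r'} e_s ⊗ U(e_s ⊗ e_{r'} ⊗ ε)|_T ⊗ e_{r'}`. -/
def chiState (Q t n k : ℕ) (h1 : t = k + (n - t)) (h2 : n - t = n - t - 1 + 1)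
    (U : Matrix (Fin t → Fin Q) (Fin t → Fin Q) ℂ) (ε : Fin Q → ℂ) :
    (Fin k → Fin Q) → (Fin t → Fin Q) → (Fin (n - t - 1) → Fin Q) → ℂ :=
  fun s a r' => (Real.sqrt ((Q : ℝ) ^ (t - 1)) : ℂ)⁻¹ *
    ∑ rl : Fin Q,
      U a (fun i => Fin.append s
            (fun j => Fin.snoc (α := fun _ => Fin Q) r' rl (Fin.cast h2 j))
            (Fin.cast h1 i)) * ε rl

/-- Single-qudit reduced density matrix of a three-register state, for the `p`-th qudit of the
middle register (all other registers are traced out). -/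
def rdmMid {α β : Type*} [Fintype α] [Fintype β] {Q m : ℕ}
    (χ : α → (Fin m → Fin Q) → β → ℂ) (p : Fin m) : Matrix (Fin Q) (Fin Q) ℂ :=
  Matrix.of fun x y => ∑ s : α, ∑ a : Fin m → Fin Q, ∑ b : β,
    (if a p = x then 1 else 0) * χ s a b *
      (starRingEnd ℂ) (χ s (Function.update a p y) b)

/-- Single-qudit reduced density matrix of a three-register state, for the `p`-th qudit of the
last register (all other registers are traced out). -/
def rdmLast {α β : Type*} [Fintype α] [Fintype β] {Q m : ℕ}
    (χ : α → β → (Fin m → Fin Q) → ℂ) (p : Fin m) : Matrix (Fin Q) (Fin Q) ℂ :=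
  Matrix.of fun x y => ∑ s : α, ∑ b : β, ∑ r : Fin m → Fin Q,
    (if r p = x then 1 else 0) * χ s b r *
      (starRingEnd ℂ) (χ s b (Function.update r p y))

/-!
Write `Φ(s, (a, r, z))` for the amplitude of `Φ` at the string carrying `a` on `T`, `r` on the
first `n - t - 1` qudits of `Tᶜ` and `z` on its last one. The standard form gives
`Φ(s, (a, r, z)) = Q^{-t/2} U(a, (s, r, z))`, hence `χ(s, a, r) = √Q · Σ_z ε(z) Φ(s, (a, r, z))`.

Normalization of `χ` and the single-qudit marginals on `Tᶜ` only use unitarity of `U`: distinct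
`(s, r, z)` label orthonormal columns of `U`, so `Σ_a χ(s, a, r) χ̄(s, a, r')` is
`Q^{-(t-1)} [r = r']`. For a qudit `j ∈ T` the marginal of `χ` is
`Q · Σ_{z,z'} ε(z) ε̄(z') ρ_{j,last}((x, z), (y, z'))`, where `ρ_{j,last}` is the two-qudit
marginal of `Φ`. As `t ≥ 2`, that marginal is a partial trace of a maximally mixed `t`-qudit
marginal, hence maximally mixed itself.
-/

open Finset ComplexConjugate

variable {Q : ℕ}

section PartialTrace

variable {K N : ℕ} (Φ : (Fin K → Fin Q) → (Fin N → Fin Q) → ℂ) {A B : Finset (Fin N)}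

theorem restrict_mergeOn_mem (u : {i // i ∈ A} → Fin Q) (v : {i // i ∉ A} → Fin Q) :
    (fun i : {i // i ∈ A} => mergeOn A u v i) = u :=
  funext fun i => dif_pos i.2

theorem restrict_mergeOn_notMem (u : {i // i ∈ A} → Fin Q) (v : {i // i ∉ A} → Fin Q) :
    (fun i : {i // i ∉ A} => mergeOn A u v i) = v :=
  funext fun i => dif_neg i.2

theorem sum_eq_sum_mergeOn (A : Finset (Fin N)) (f : (Fin N → Fin Q) → ℂ) :
    ∑ w, f w = ∑ u, ∑ v, f (mergeOn A u v) := by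
  rw [← (Equiv.piEquivPiSubtypeProd (· ∈ A) fun _ => Fin Q).symm.sum_comp, Fintype.sum_prod_type]
  rfl

theorem rdm_apply_eq_sum_ite (A : Finset (Fin N)) (u v : {i // i ∈ A} → Fin Q) :
    rdm Φ A u v = ∑ s, ∑ w : Fin N → Fin Q,
      if (fun i : {i // i ∈ A} => w i) = u then
        Φ s w * conj (Φ s (mergeOn A v fun i => w i)) else 0 := by
  simp only [rdm, Matrix.of_apply]
  refine sum_congr rfl fun s _ => ?_
  simp [sum_eq_sum_mergeOn A, restrict_mergeOn_mem, restrict_mergeOn_notMem]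

def mergeOnSdiff (u : {i // i ∈ A} → Fin Q) (z : {i // i ∈ B \ A} → Fin Q) :
    {i // i ∈ B} → Fin Q :=
  fun i => if h : i.1 ∈ A then u ⟨i, h⟩ else z ⟨i, mem_sdiff.2 ⟨i.2, h⟩⟩

theorem restrict_eq_mergeOnSdiff_iff (hAB : A ⊆ B) (w : Fin N → Fin Q)
    (u : {i // i ∈ A} → Fin Q) (z : {i // i ∈ B \ A} → Fin Q) :
    (fun i : {i // i ∈ B} => w i) = mergeOnSdiff u z ↔
      (fun i : {i // i ∈ A} => w i) = u ∧ (fun i : {i // i ∈ B \ A} => w i) = z := by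
  simp only [funext_iff, mergeOnSdiff, Subtype.forall]
  constructor
  · intro h
    refine ⟨fun i hi => by simpa [hi] using h i (hAB hi), fun i hi => ?_⟩
    have hi' := mem_sdiff.1 hi
    simpa [hi'.2] using h i hi'.1
  · rintro ⟨hu, hz⟩ i hi
    by_cases hiA : i ∈ A
    · simp [hiA, hu]
    · simp [hiA, hz i (mem_sdiff.2 ⟨hi, hiA⟩)]

theorem mergeOnSdiff_inj (hAB : A ⊆ B) (u v : {i // i ∈ A} → Fin Q)
    (z : {i // i ∈ B \ A} → Fin Q) : mergeOnSdiff u z = mergeOnSdiff v z ↔ u = v := by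
  refine ⟨fun h => funext fun i => ?_, fun h => h ▸ rfl⟩
  simpa [mergeOnSdiff] using congrFun h ⟨i, hAB i.2⟩

theorem rdm_apply_eq_sum_rdm_of_subset (hAB : A ⊆ B) (u v : {i // i ∈ A} → Fin Q) :
    rdm Φ A u v = ∑ z : {i // i ∈ B \ A} → Fin Q,
      rdm Φ B (mergeOnSdiff u z) (mergeOnSdiff v z) := by
  have hmerge : ∀ w : Fin N → Fin Q, mergeOn B (mergeOnSdiff v fun i => w i) (fun i => w i)
      = mergeOn A v fun i => w i := by
    intro w
    funext i
    by_cases hiA : i ∈ A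
    · simp [mergeOn, mergeOnSdiff, hiA, hAB hiA]
    · by_cases hiB : i ∈ B <;> simp [mergeOn, mergeOnSdiff, hiA, hiB]
  simp only [rdm_apply_eq_sum_ite, restrict_eq_mergeOnSdiff_iff hAB, ite_and]
  rw [← sum_comm_cycle]
  refine sum_congr rfl fun s _ => sum_congr rfl fun w _ => ?_
  by_cases hu : (fun i : {i // i ∈ A} => w i) = u <;> simp [hu, hmerge]

variable {Φ} in
theorem TUniform.rdm_eq_of_card_le {t : ℕ} (hQ : Q ≠ 0) (hΦ : TUniform t Φ) (htN : t ≤ N)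
    (hA : A.card ≤ t) : rdm Φ A = ((Q : ℂ) ^ A.card)⁻¹ • 1 := by
  obtain ⟨B, hAB, -, hB⟩ := exists_subsuperset_card_eq (subset_univ A) hA (by simpa using htN)
  ext u v
  have hcard : Fintype.card ({i // i ∈ B \ A} → Fin Q) = Q ^ (t - A.card) := by
    rw [Fintype.card_fun, Fintype.card_coe, card_sdiff_of_subset hAB, hB, Fintype.card_fin]
  simp only [rdm_apply_eq_sum_rdm_of_subset Φ hAB, hΦ B hB, Matrix.smul_apply, Matrix.one_apply,
    mergeOnSdiff_inj hAB, sum_const, card_univ, hcard, smul_eq_mul, nsmul_eq_mul]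
  have hQ' : (Q : ℂ) ≠ 0 := by exact_mod_cast hQ
  rw [show t = t - A.card + A.card by omega, pow_add]
  push_cast
  field_simp
  simp

theorem restrict_pair_eq_iff {j m : Fin N} (hjm : j ≠ m) (w : Fin N → Fin Q) (x z : Fin Q) :
    (fun i : {i // i ∈ ({j, m} : Finset (Fin N))} => w i) = (fun i => if i.1 = j then x else z) ↔
      w j = x ∧ w m = z := by
  constructor
  · intro h
    exact ⟨by simpa using congrFun h ⟨j, by simp⟩,
      by simpa [hjm.symm] using congrFun h ⟨m, by simp⟩⟩
  · rintro ⟨hj, hm⟩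
    funext ⟨i, hi⟩
    rcases mem_insert.1 hi with rfl | hi
    · simp [hj]
    · simp [mem_singleton.1 hi, hm, hjm.symm]

theorem rdm_pair_apply {j m : Fin N} (hjm : j ≠ m) (x y z z' : Fin Q) :
    rdm Φ {j, m} (fun i => if i.1 = j then x else z) (fun i => if i.1 = j then y else z') =
      ∑ s, ∑ w : Fin N → Fin Q, if w j = x ∧ w m = z then
        Φ s w * conj (Φ s (Function.update (Function.update w j y) m z')) else 0 := by
  rw [rdm_apply_eq_sum_ite]
  refine sum_congr rfl fun s _ => sum_congr rfl fun w _ => ?_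
  have hmerge : mergeOn {j, m} (fun i => if i.1 = j then y else z') (fun i => w i)
      = Function.update (Function.update w j y) m z' := by
    funext i
    by_cases hij : i = j
    · simp [mergeOn, hij, hjm]
    · by_cases him : i = m
      · subst him
        simp [mergeOn, hij]
      · simp [mergeOn, hij, him]
  rw [hmerge]
  exact if_congr (restrict_pair_eq_iff hjm w x z) rfl rfl

variable {Φ} in
theorem TUniform.sum_ite_update_update {t : ℕ} (hQ : Q ≠ 0) (hΦ : TUniform t Φ) (ht : 2 ≤ t)
    (htN : t ≤ N) {j m : Fin N} (hjm : j ≠ m) (x y z z' : Fin Q) :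
    ∑ s, ∑ w : Fin N → Fin Q, (if w j = x ∧ w m = z then
        Φ s w * conj (Φ s (Function.update (Function.update w j y) m z')) else 0) =
      ((Q : ℂ) ^ 2)⁻¹ * if x = y ∧ z = z' then 1 else 0 := by
  rw [← rdm_pair_apply Φ hjm, hΦ.rdm_eq_of_card_le hQ htN (by rw [card_pair hjm]; omega),
    card_pair hjm, Matrix.smul_apply, Matrix.one_apply, smul_eq_mul]
  congr 2
  exact propext ((restrict_pair_eq_iff hjm (fun i => if i = j then x else z) y z').trans
    (by simp [hjm.symm]))

end PartialTrace

theorem Matrix.sum_mul_conj_of_mem_unitaryGroup {ι β : Type*} [Fintype ι] [DecidableEq ι]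
    [Fintype β] {U : Matrix ι ι ℂ} (hU : U ∈ Matrix.unitaryGroup ι ℂ) (v w : β → ι)
    (f g : β → ℂ) :
    ∑ a, (∑ i, U a (v i) * f i) * conj (∑ j, U a (w j) * g j)
      = ∑ i, ∑ j, if v i = w j then f i * conj (g j) else 0 := by
  have horth : ∀ c c', ∑ a, U a c * conj (U a c') = if c = c' then 1 else 0 := by
    intro c c'
    have h := congrFun (congrFun (Matrix.mem_unitaryGroup_iff'.1 hU) c') c
    simp only [Matrix.mul_apply, Matrix.star_apply, Matrix.one_apply, RCLike.star_def] at h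
    simpa [mul_comm, eq_comm] using h
  simp only [map_sum, map_mul, sum_mul_sum]
  rw [← sum_comm_cycle]
  refine sum_congr rfl fun i _ => sum_congr rfl fun j _ => ?_
  calc ∑ a, U a (v i) * f i * (conj (U a (w j)) * conj (g j))
      = (∑ a, U a (v i) * conj (U a (w j))) * (f i * conj (g j)) := by
        rw [sum_mul]
        exact sum_congr rfl fun a _ => by ring
    _ = _ := by
        rw [horth]
        split_ifs <;> simp

theorem inv_sqrt_mul_mul_conj {x : ℝ} (hx : 0 ≤ x) (u v : ℂ) :
    (Real.sqrt x : ℂ)⁻¹ * u * conj ((Real.sqrt x : ℂ)⁻¹ * v) = (x : ℂ)⁻¹ * (u * conj v) := by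
  rw [map_mul, mul_mul_mul_comm, map_inv₀, Complex.conj_ofReal, ← mul_inv, ← Complex.ofReal_mul,
    Real.mul_self_sqrt hx]

theorem sum_ite_apply_eq {m : ℕ} (p : Fin m) (x : Fin Q) :
    ∑ r : Fin m → Fin Q, (if r p = x then 1 else 0 : ℂ) = (Q : ℂ) ^ (m - 1) := by
  rw [← (Equiv.funSplitAt p (Fin Q)).symm.sum_comp, Fintype.sum_prod_type]
  simp [Equiv.funSplitAt_symm_apply, Fintype.card_subtype_compl]

theorem rank_inv_natCast_smul_one (hQ : Q ≠ 0) :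
    ((Q : ℂ)⁻¹ • (1 : Matrix (Fin Q) (Fin Q) ℂ)).rank = Q := by
  rw [Matrix.rank_of_isUnit _ ?_, Fintype.card_fin]
  rw [← Algebra.algebraMap_eq_smul_one]
  exact (isUnit_iff_ne_zero.2 (inv_ne_zero (Nat.cast_ne_zero.2 hQ))).map _

def chiColumn {k d m t : ℕ} (h1 : t = k + d) (h2 : d = m + 1) (s : Fin k → Fin Q)
    (r : Fin m → Fin Q) (z : Fin Q) : Fin t → Fin Q :=
  fun i => Fin.append s (fun j => Fin.snoc (α := fun _ => Fin Q) r z (Fin.cast h2 j))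
    (Fin.cast h1 i)

theorem chiColumn_inj {k d m t : ℕ} (h1 : t = k + d) (h2 : d = m + 1)
    {s s' : Fin k → Fin Q} {r r' : Fin m → Fin Q} {z z' : Fin Q} :
    chiColumn h1 h2 s r z = chiColumn h1 h2 s' r' z' ↔ s = s' ∧ r = r' ∧ z = z' := by
  subst h1 h2
  refine ⟨fun h => ?_, by rintro ⟨rfl, rfl, rfl⟩; rfl⟩
  have happ : Fin.appendEquiv k (m + 1) (s, Fin.snoc r z)
      = Fin.appendEquiv k (m + 1) (s', Fin.snoc r' z') := h
  obtain ⟨rfl, hsnoc⟩ := Prod.mk.inj ((Fin.appendEquiv k (m + 1)).injective happ)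
  have hzr : Fin.snocEquiv (fun _ => Fin Q) (z, r) = Fin.snocEquiv (fun _ => Fin Q) (z', r') :=
    hsnoc
  obtain ⟨rfl, rfl⟩ := Prod.mk.inj ((Fin.snocEquiv fun _ => Fin Q).injective hzr)
  exact ⟨rfl, rfl, rfl⟩

section ChiState

variable {t n k : ℕ} (h1 : t = k + (n - t)) (h2 : n - t = n - t - 1 + 1)
  {U : Matrix (Fin t → Fin Q) (Fin t → Fin Q) ℂ} {ε : Fin Q → ℂ}

theorem chiState_mul_conj (s : Fin k → Fin Q) (a : Fin t → Fin Q) (r : Fin (n - t - 1) → Fin Q)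
    (s' : Fin k → Fin Q) (a' : Fin t → Fin Q) (r' : Fin (n - t - 1) → Fin Q) :
    chiState Q t n k h1 h2 U ε s a r * conj (chiState Q t n k h1 h2 U ε s' a' r') =
      ((Q : ℂ) ^ (t - 1))⁻¹ * ((∑ z, U a (chiColumn h1 h2 s r z) * ε z) *
        conj (∑ z, U a' (chiColumn h1 h2 s' r' z) * ε z)) := by
  rw [chiState, chiState, inv_sqrt_mul_mul_conj (by positivity)]
  push_cast
  rfl

variable (hU : U ∈ Matrix.unitaryGroup (Fin t → Fin Q) ℂ)
  (hε : ∑ m : Fin Q, ε m * conj (ε m) = 1)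
include hU hε

theorem sum_chiState_mul_conj (s : Fin k → Fin Q) (r r' : Fin (n - t - 1) → Fin Q) :
    ∑ a, chiState Q t n k h1 h2 U ε s a r * conj (chiState Q t n k h1 h2 U ε s a r') =
      ((Q : ℂ) ^ (t - 1))⁻¹ * if r = r' then 1 else 0 := by
  simp only [chiState_mul_conj, ← mul_sum, Matrix.sum_mul_conj_of_mem_unitaryGroup hU,
    chiColumn_inj, true_and]
  by_cases hr : r = r' <;> simp [hr, hε]

theorem chiState_normalized (hQ : Q ≠ 0) :
    ∑ s, ∑ a, ∑ r, chiState Q t n k h1 h2 U ε s a r * conj (chiState Q t n k h1 h2 U ε s a r)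
      = 1 := by
  simp only [sum_comm (γ := Fin t → Fin Q), sum_chiState_mul_conj h1 h2 hU hε, if_pos, sum_const,
    card_univ, Fintype.card_fun, Fintype.card_fin, nsmul_eq_mul, ← mul_assoc, mul_one]
  push_cast
  rw [← pow_add, show k + (n - t - 1) = t - 1 by omega]
  exact mul_inv_cancel₀ (pow_ne_zero _ (Nat.cast_ne_zero.2 hQ : (Q : ℂ) ≠ 0))

theorem rdmLast_chiState (hQ : Q ≠ 0) (p : Fin (n - t - 1)) :
    rdmLast (fun s (a : Fin t → Fin Q) r => chiState Q t n k h1 h2 U ε s a r) p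
      = (Q : ℂ)⁻¹ • 1 := by
  ext x y
  have hterm : ∀ r : Fin (n - t - 1) → Fin Q,
      (if r p = x then 1 else 0 : ℂ) * (((Q : ℂ) ^ (t - 1))⁻¹ * if r p = y then 1 else 0) =
        (((Q : ℂ) ^ (t - 1))⁻¹ * if x = y then 1 else 0) * if r p = x then 1 else 0 := by
    intro r
    by_cases hx : r p = x <;> simp [hx]
  have hQ' : (Q : ℂ) ≠ 0 := Nat.cast_ne_zero.2 hQ
  have hp := p.pos
  simp only [rdmLast, Matrix.of_apply, mul_assoc, sum_comm (γ := Fin t → Fin Q), ← mul_sum,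
    sum_chiState_mul_conj h1 h2 hU hε, Function.eq_update_self_iff, hterm, sum_ite_apply_eq,
    sum_const, card_univ, Fintype.card_fun, Fintype.card_fin, nsmul_eq_mul, Matrix.smul_apply,
    Matrix.one_apply, smul_eq_mul]
  push_cast
  rw [show t - 1 = k + (n - t - 1 - 1) + 1 by omega, pow_succ, pow_add]
  by_cases hxy : x = y
  · simp only [hxy, if_pos]
    field_simp
  · simp [hxy]

end ChiState

section SplitString

variable {t d m n : ℕ} (e : Fin t ⊕ Fin d ≃ Fin n) (h2 : d = m + 1)

def splitString (a : Fin t → Fin Q) (r : Fin m → Fin Q) (z : Fin Q) : Fin n → Fin Q :=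
  Sum.elim a (fun j => Fin.snoc (α := fun _ => Fin Q) r z (Fin.cast h2 j)) ∘ e.symm

theorem sum_eq_sum_splitString (F : (Fin n → Fin Q) → ℂ) :
    ∑ w, F w = ∑ a, ∑ r, ∑ z, F (splitString e h2 a r z) := by
  subst h2
  rw [← (e.arrowCongr (Equiv.refl (Fin Q))).sum_comp,
    ← (Equiv.sumArrowEquivProdArrow _ _ _).symm.sum_comp, Fintype.sum_prod_type]
  refine sum_congr rfl fun a _ => ?_
  rw [← (Fin.snocEquiv fun _ => Fin Q).sum_comp, Fintype.sum_prod_type, sum_comm]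
  rfl

variable (a : Fin t → Fin Q) (r : Fin m → Fin Q) (z : Fin Q)

theorem splitString_apply_inl (i : Fin t) : splitString e h2 a r z (e (.inl i)) = a i := by
  simp [splitString]

theorem splitString_apply_inr (j : Fin d) :
    splitString e h2 a r z (e (.inr j)) = Fin.snoc (α := fun _ => Fin Q) r z (Fin.cast h2 j) := by
  simp [splitString]

theorem splitString_apply_last :
    splitString e h2 a r z (e (.inr (Fin.cast h2.symm (Fin.last m)))) = z := by
  simp [splitString]

theorem update_update_splitString (p : Fin t) (y z' : Fin Q) :
    Function.update (Function.update (splitString e h2 a r z) (e (.inl p)) y)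
        (e (.inr (Fin.cast h2.symm (Fin.last m)))) z' =
      splitString e h2 (Function.update a p y) r z' := by
  have hcomp : ∀ (f : Fin t ⊕ Fin d → Fin Q) b v,
      Function.update (f ∘ e.symm) (e b) v = Function.update f b v ∘ e.symm := fun f b v => by
    rw [Function.update_comp_equiv, Equiv.symm_symm]
  subst h2
  simp only [splitString, hcomp, Sum.update_elim_inl, Sum.update_elim_inr, Fin.cast_eq_self,
    Fin.update_snoc_last]

end SplitString

section StandardForm

variable {t n k d m : ℕ} {Φ : (Fin k → Fin Q) → (Fin n → Fin Q) → ℂ} {T : Finset (Fin n)}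
  (hT : T.card = t) (hTc : Tᶜ.card = d) (h1 : t = k + d) (h2 : d = m + 1)
  {U : Matrix (Fin t → Fin Q) (Fin t → Fin Q) ℂ}
  (hUstd : ∀ (s : Fin k → Fin Q) (w : Fin n → Fin Q),
    Φ s w = (Real.sqrt ((Q : ℝ) ^ t) : ℂ)⁻¹ *
      U (fun i => w (T.orderEmbOfFin hT i))
        (fun i => Fin.append s (fun j => w (Tᶜ.orderEmbOfFin hTc j)) (Fin.cast h1 i)))
include hUstd

theorem apply_splitString_of_standardForm (s : Fin k → Fin Q) (a : Fin t → Fin Q)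
    (r : Fin m → Fin Q) (z : Fin Q) :
    Φ s (splitString (finSumEquivOfFinset hT hTc) h2 a r z) =
      (Real.sqrt ((Q : ℝ) ^ t) : ℂ)⁻¹ * U a (chiColumn h1 h2 s r z) := by
  simp only [hUstd, ← finSumEquivOfFinset_inl hT hTc, ← finSumEquivOfFinset_inr hT hTc,
    splitString_apply_inl, splitString_apply_inr]
  rfl

theorem sum_ite_mul_conj_chiColumn_of_tUniform (hQ : Q ≠ 0) (ht : 2 ≤ t) (hΦ : TUniform t Φ)
    (p : Fin t) (x y z z' : Fin Q) :
    ∑ s, ∑ a, ∑ r, (if a p = x then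
        U a (chiColumn h1 h2 s r z) * conj (U (Function.update a p y) (chiColumn h1 h2 s r z'))
        else 0) = (Q : ℂ) ^ (t - 2) * if x = y ∧ z = z' then 1 else 0 := by
  have hjm : finSumEquivOfFinset hT hTc (.inl p) ≠
      finSumEquivOfFinset hT hTc (.inr (Fin.cast h2.symm (Fin.last m))) :=
    (finSumEquivOfFinset hT hTc).injective.ne Sum.inl_ne_inr
  have htn : t ≤ n := by simpa [hT] using T.card_le_univ
  have hpair := hΦ.sum_ite_update_update hQ ht htn hjm x y z z'
  simp only [sum_eq_sum_splitString (finSumEquivOfFinset hT hTc) h2, splitString_apply_inl,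
    splitString_apply_last, update_update_splitString,
    apply_splitString_of_standardForm hT hTc h1 h2 hUstd,
    inv_sqrt_mul_mul_conj (pow_nonneg (Nat.cast_nonneg Q) t)] at hpair
  have hcollapse : ∀ (P : Prop) [Decidable P] (f : Fin Q → ℂ),
      (∑ w, if P ∧ w = z then f w else 0) = if P then f z else 0 := by
    intro P _ f
    by_cases hP : P <;> simp [hP]
  simp only [hcollapse] at hpair
  push_cast at hpair
  have hQ' : (Q : ℂ) ≠ 0 := Nat.cast_ne_zero.2 hQ
  rw [← mul_right_inj' (inv_ne_zero (pow_ne_zero t hQ'))]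
  conv_lhs => simp only [mul_sum, mul_ite_zero]
  rw [hpair, show (Q : ℂ) ^ t = (Q : ℂ) ^ (t - 2) * (Q : ℂ) ^ 2 by rw [← pow_add]; congr 1; omega,
    mul_inv, mul_comm ((Q : ℂ) ^ (t - 2))⁻¹, mul_assoc, inv_mul_cancel_left₀ (pow_ne_zero _ hQ')]

end StandardForm

theorem rdmMid_chiState {t n k : ℕ} {Φ : (Fin k → Fin Q) → (Fin n → Fin Q) → ℂ}
    {T : Finset (Fin n)} (hT : T.card = t) (hTc : Tᶜ.card = n - t) (h1 : t = k + (n - t))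
    (h2 : n - t = n - t - 1 + 1) {U : Matrix (Fin t → Fin Q) (Fin t → Fin Q) ℂ}
    {ε : Fin Q → ℂ} (hQ : Q ≠ 0) (ht : 2 ≤ t) (hΦ : TUniform t Φ)
    (hUstd : ∀ (s : Fin k → Fin Q) (w : Fin n → Fin Q),
      Φ s w = (Real.sqrt ((Q : ℝ) ^ t) : ℂ)⁻¹ *
        U (fun i => w (T.orderEmbOfFin hT i))
          (fun i => Fin.append s (fun j => w (Tᶜ.orderEmbOfFin hTc j)) (Fin.cast h1 i)))
    (hε : ∑ m : Fin Q, ε m * conj (ε m) = 1) (p : Fin t) :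
    rdmMid (chiState Q t n k h1 h2 U ε) p = (Q : ℂ)⁻¹ • 1 := by
  ext x y
  have hterm : ∀ s a r, (if a p = x then 1 else 0 : ℂ) *
      (chiState Q t n k h1 h2 U ε s a r *
        conj (chiState Q t n k h1 h2 U ε s (Function.update a p y) r)) =
      ((Q : ℂ) ^ (t - 1))⁻¹ * ∑ z, ∑ z', ε z * conj (ε z') *
        if a p = x then U a (chiColumn h1 h2 s r z) *
          conj (U (Function.update a p y) (chiColumn h1 h2 s r z')) else 0 := by
    intro s a r
    rw [chiState_mul_conj, map_sum, sum_mul_sum]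
    split_ifs
    · simp only [mul_sum, map_mul, one_mul]
      exact sum_congr rfl fun z _ => sum_congr rfl fun z' _ => by ring
    · simp
  simp only [rdmMid, Matrix.of_apply, mul_assoc]
  simp only [hterm, ← mul_sum]
  simp only [sum_comm (γ := Fin (n - t - 1) → Fin Q) (α := Fin Q),
    sum_comm (γ := Fin t → Fin Q) (α := Fin Q), sum_comm (γ := Fin k → Fin Q) (α := Fin Q),
    ← mul_sum, sum_ite_mul_conj_chiColumn_of_tUniform hT hTc h1 h2 hUstd hQ ht hΦ]
  rw [Matrix.smul_apply, Matrix.one_apply, smul_eq_mul]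
  by_cases hxy : x = y
  · simp only [hxy, true_and, mul_ite, mul_one, mul_zero, sum_ite_eq, mem_univ, if_pos,
      ← sum_mul, hε, one_mul]
    rw [show t - 1 = t - 2 + 1 by omega, pow_succ, mul_inv, mul_comm,
      mul_inv_cancel_left₀ (pow_ne_zero _ (Nat.cast_ne_zero.2 hQ : (Q : ℂ) ≠ 0))]
  · simp [hxy]

/-- Lemma C.2.  With `T ⊆ {1,…,n-1}`, `|T| = t`, `U` a `T`-standard-form
unitary for the `t`-uniform state `Φ`, and `ε` a unit vector, the state `χ` is a unit vector
whose reduced density matrix on every single qudit `j ∈ {1,…,n-1}` (i.e. on every qudit of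
`T` and every qudit of `{1,…,n-1} \ T`) equals `Q⁻¹ · I`; in particular the Schmidt rank of
`χ` across (qudit `j` | all other registers) equals `Q`. -/
theorem stmt_7 (Q t n : ℕ) (hQ : 2 ≤ Q) (ht : 2 ≤ t) (htn : t < n) (hn : n ≤ 2 * t)
    (k : ℕ) (hk : k = 2 * t - n)
    (Φ : (Fin k → Fin Q) → (Fin n → Fin Q) → ℂ)
    (huniform : TUniform t Φ)
    (T : Finset (Fin n)) (hT : T.card = t) (hTc : Tᶜ.card = n - t)
    (U : Matrix (Fin t → Fin Q) (Fin t → Fin Q) ℂ)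
    (hUuni : U ∈ Matrix.unitaryGroup (Fin t → Fin Q) ℂ)
    (hUstd : ∀ (s : Fin k → Fin Q) (w : Fin n → Fin Q),
      Φ s w = (Real.sqrt ((Q : ℝ) ^ t) : ℂ)⁻¹ *
        U (fun i => w (T.orderEmbOfFin hT i))
          (fun i => Fin.append s (fun j => w (Tᶜ.orderEmbOfFin hTc j))
            (Fin.cast (by omega : t = k + (n - t)) i)))
    (ε : Fin Q → ℂ) (hε : ∑ m : Fin Q, ε m * (starRingEnd ℂ) (ε m) = 1) :
    -- χ is a unit vector
    (∑ s : Fin k → Fin Q, ∑ a : Fin t → Fin Q, ∑ r' : Fin (n - t - 1) → Fin Q,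
        chiState Q t n k (by omega) (by omega) U ε s a r' *
          (starRingEnd ℂ) (chiState Q t n k (by omega) (by omega) U ε s a r') = 1) ∧
    -- every qudit of T is maximally mixed, and has Schmidt rank Q against the rest
    (∀ p : Fin t,
      rdmMid (chiState Q t n k (by omega) (by omega) U ε) p
          = ((Q : ℂ))⁻¹ • (1 : Matrix (Fin Q) (Fin Q) ℂ) ∧
        (rdmMid (chiState Q t n k (by omega) (by omega) U ε) p).rank = Q) ∧
    -- every qudit of {1,…,n-1} \ T is maximally mixed, with Schmidt rank Q against the rest
    (∀ p : Fin (n - t - 1),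
      rdmLast (fun s (a : Fin t → Fin Q) r' =>
            chiState Q t n k (by omega) (by omega) U ε s a r') p
          = ((Q : ℂ))⁻¹ • (1 : Matrix (Fin Q) (Fin Q) ℂ) ∧
        (rdmLast (fun s (a : Fin t → Fin Q) r' =>
            chiState Q t n k (by omega) (by omega) U ε s a r') p).rank = Q) := by
  have hQ0 : Q ≠ 0 := by omega
  have h1 : t = k + (n - t) := by omega
  have h2 : n - t = n - t - 1 + 1 := by omega
  have hMid := rdmMid_chiState hT hTc h1 h2 hQ0 ht huniform hUstd hε
  have hLast := rdmLast_chiState h1 h2 hUuni hε hQ0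
  refine ⟨chiState_normalized h1 h2 hUuni hε hQ0, fun p => ⟨hMid p, ?_⟩, fun p => ⟨hLast p, ?_⟩⟩
  · rw [hMid p, rank_inv_natCast_smul_one hQ0]
  · rw [hLast p, rank_inv_natCast_smul_one hQ0]
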